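/- A right R-module M is absolutely pure if and only if M is a pure submodule of its injective hull. -/

import Mathlib

open TensorProduct MulOpposite

noncomputable section

/-- The tensor product `M ⊗_R N` of a right `R`-module `M` and a left `R`-module `N`,
constructed as a quotient of `M ⊗_ℤ N` by the balancing relations. -/
def BalancedRel (R : Type) [Ring R] (M N : Type) [AddCommGroup M] [Module Rᵐᵒᵖ M]
    [AddCommGroup N] [Module R N] : Submodule ℤ (M ⊗[ℤ] N) :=
  Submodule.span ℤ {x | ∃ (m : M) (r : R) (n : N),
    x = (op r • m) ⊗ₜ[ℤ] n - m ⊗ₜ[ℤ] (r • n)}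

def RTensor (R : Type) [Ring R] (M N : Type) [AddCommGroup M] [Module Rᵐᵒᵖ M]
    [AddCommGroup N] [Module R N] : Type :=
  M ⊗[ℤ] N ⧸ BalancedRel R M N

instance (R : Type) [Ring R] (M N : Type) [AddCommGroup M] [Module Rᵐᵒᵖ M]
    [AddCommGroup N] [Module R N] : AddCommGroup (RTensor R M N) :=
  inferInstanceAs (AddCommGroup (M ⊗[ℤ] N ⧸ BalancedRel R M N))

/-- `m ⊗ n` as an element of `RTensor R M N`. -/
def rtmk (R : Type) [Ring R] {M N : Type} [AddCommGroup M] [Module Rᵐᵒᵖ M]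
    [AddCommGroup N] [Module R N] (m : M) (n : N) : RTensor R M N :=
  Submodule.Quotient.mk (m ⊗ₜ[ℤ] n)

/-- The map `M ⊗_R N → M ⊗_R N'` induced by a map `f : N → N'` of left modules. -/
def lTensorMap (R : Type) [Ring R] {M N N' : Type} [AddCommGroup M] [Module Rᵐᵒᵖ M]
    [AddCommGroup N] [Module R N] [AddCommGroup N'] [Module R N']
    (f : N →ₗ[R] N') : RTensor R M N →ₗ[ℤ] RTensor R M N' :=
  Submodule.mapQ _ _ (LinearMap.lTensor M (f.restrictScalars ℤ)) (by
    rw [BalancedRel, Submodule.span_le]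
    rintro x ⟨m, r, n, rfl⟩
    refine Submodule.subset_span ⟨m, r, f n, ?_⟩
    show LinearMap.lTensor M (f.restrictScalars ℤ) ((op r • m) ⊗ₜ[ℤ] n - m ⊗ₜ[ℤ] (r • n)) =
      (op r • m) ⊗ₜ[ℤ] f n - m ⊗ₜ[ℤ] (r • f n)
    simp [map_sub])

/-- The map `M ⊗_R N → M' ⊗_R N` induced by a map `g : M → M'` of right modules. -/
def rTensorMap (R : Type) [Ring R] {M M' N : Type} [AddCommGroup M] [Module Rᵐᵒᵖ M]
    [AddCommGroup M'] [Module Rᵐᵒᵖ M'] [AddCommGroup N] [Module R N]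
    (g : M →ₗ[Rᵐᵒᵖ] M') : RTensor R M N →ₗ[ℤ] RTensor R M' N :=
  Submodule.mapQ _ _ (LinearMap.rTensor N (g.restrictScalars ℤ)) (by
    rw [BalancedRel, Submodule.span_le]
    rintro x ⟨m, r, n, rfl⟩
    refine Submodule.subset_span ⟨g m, r, n, ?_⟩
    show LinearMap.rTensor N (g.restrictScalars ℤ) ((op r • m) ⊗ₜ[ℤ] n - m ⊗ₜ[ℤ] (r • n)) =
      (op r • g m) ⊗ₜ[ℤ] n - g m ⊗ₜ[ℤ] (r • n)
    simp [map_sub])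

/-- A right `R`-module `M` is flat if tensoring with it preserves injectivity of
maps of left `R`-modules. -/
def IsFlatRight (R : Type) [Ring R] (M : Type) [AddCommGroup M] [Module Rᵐᵒᵖ M] : Prop :=
  ∀ (A B : Type) [AddCommGroup A] [Module R A] [AddCommGroup B] [Module R B]
    (f : A →ₗ[R] B), Function.Injective f →
      Function.Injective (lTensorMap R (M := M) f)

/-- A map of right `R`-modules is pure if tensoring with any left module preserves
its injectivity. -/
def IsPure (R : Type) [Ring R] {M N : Type} [AddCommGroup M] [Module Rᵐᵒᵖ M]
    [AddCommGroup N] [Module Rᵐᵒᵖ N] (j : M →ₗ[Rᵐᵒᵖ] N) : Prop :=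
  ∀ (L : Type) [AddCommGroup L] [Module R L],
    Function.Injective (rTensorMap R (N := L) j)

/-- A right `R`-module `M` is absolutely pure if every monomorphism with domain `M`
is a pure monomorphism. -/
def AbsolutelyPure (R : Type) [Ring R] (M : Type) [AddCommGroup M] [Module Rᵐᵒᵖ M] : Prop :=
  ∀ (N : Type) [AddCommGroup N] [Module Rᵐᵒᵖ N] (j : M →ₗ[Rᵐᵒᵖ] N),
    Function.Injective j → IsPure R j

/-!
An injective hull exists: inside an injective module containing `M`, a maximal essential extension
of `M` is a direct summand, hence injective. If `M → E(M)` is pure and `j : M → N` is any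
monomorphism, the inclusion `M → E(M)` factors through `j` by injectivity of `E(M)`, and a map is
pure as soon as some composite with it is.
-/

section EssentialExtension

variable {α : Type*} [CompleteLattice α]

def IsEssentialIn (a b : α) : Prop :=
  a ≤ b ∧ ∀ k ≤ b, Disjoint k a → k = ⊥

theorem IsEssentialIn.refl (a : α) : IsEssentialIn a a :=
  ⟨le_rfl, fun _ hk hka => hka.eq_bot_of_le hk⟩

theorem IsEssentialIn.trans {a b c : α} (hab : IsEssentialIn a b) (hbc : IsEssentialIn b c) :
    IsEssentialIn a c :=
  ⟨hab.1.trans hbc.1, fun k hk hka => hbc.2 k hk <| disjoint_iff.2 <|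
    hab.2 (k ⊓ b) inf_le_right (hka.mono_left inf_le_left)⟩

variable [IsCompactlyGenerated α]

theorem isEssentialIn_sSup {a : α} {s : Set α} (hs : s.Nonempty) (hdir : DirectedOn (· ≤ ·) s)
    (h : ∀ b ∈ s, IsEssentialIn a b) : IsEssentialIn a (sSup s) := by
  obtain ⟨b, hb⟩ := hs
  refine ⟨(h b hb).1.trans (le_sSup hb), fun k hk hka => ?_⟩
  rw [← inf_eq_left.2 hk, hdir.inf_sSup_eq, iSup₂_eq_bot]
  exact fun b hb => (h b hb).2 _ inf_le_right (hka.mono_left inf_le_left)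

theorem exists_maximal_isEssentialIn (a : α) : ∃ b, Maximal (IsEssentialIn a) b := by
  obtain ⟨b, -, hb⟩ := zorn_le_nonempty₀ {b | IsEssentialIn a b}
    (fun c hcs hc y hy => ⟨sSup c, isEssentialIn_sSup ⟨y, hy⟩ hc.directedOn hcs,
      fun _ => le_sSup⟩) a (.refl a)
  exact ⟨b, hb⟩

theorem exists_maximal_disjoint (a : α) : ∃ k, Maximal (Disjoint · a) k := by
  obtain ⟨k, -, hk⟩ := zorn_le_nonempty₀ {k | Disjoint k a}
    (fun c hcs hc _ _ => ⟨sSup c, hc.directedOn.disjoint_sSup_left.2 hcs,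
      fun _ => le_sSup⟩) ⊥ disjoint_bot_left
  exact ⟨k, hk⟩

end EssentialExtension

section InjectiveHull

universe u

variable {S : Type u} [Ring S] {E : Type u} [AddCommGroup E] [Module S E]

theorem Module.Injective.of_leftInverse {Q : Type u} [AddCommGroup Q] [Module S Q]
    [Module.Injective S E] (i : Q →ₗ[S] E) (r : E →ₗ[S] Q)
    (hri : Function.LeftInverse r i) :
    Module.Injective S Q := by
  refine ⟨fun X Y _ _ _ _ f hf g => ?_⟩
  obtain ⟨h, hh⟩ := Module.Injective.out f hf (i ∘ₗ g)
  exact ⟨r ∘ₗ h, fun x => by simp [hh, hri _]⟩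

theorem Submodule.exists_endo_eq_self_and_eq_zero_of_disjoint [Module.Injective S E]
    {H K : Submodule S E} (hKH : Disjoint K H) :
    ∃ T : E →ₗ[S] E, (∀ a ∈ H, T a = a) ∧ ∀ k ∈ K, T k = 0 := by
  have hmono : Function.Injective (K.mkQ ∘ₗ H.subtype) := by
    rw [← LinearMap.ker_eq_bot, LinearMap.ker_comp, Submodule.ker_mkQ, eq_bot_iff]
    intro a ha
    exact Subtype.ext (Submodule.disjoint_def.1 hKH _ ha a.2)
  obtain ⟨g, hg⟩ := Module.Injective.out _ hmono H.subtype
  exact ⟨g ∘ₗ K.mkQ, fun a ha => hg ⟨a, ha⟩, fun k hk => by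
    simp [(Submodule.Quotient.mk_eq_zero K).2 hk]⟩

theorem Submodule.isEssentialIn_range_of_maximal_disjoint {H K : Submodule S E}
    (hK : Maximal (Disjoint · H) K) {T : E →ₗ[S] E} (hTH : ∀ a ∈ H, T a = a)
    (hTK : ∀ k ∈ K, T k = 0) : IsEssentialIn H (LinearMap.range T) := by
  refine ⟨fun a ha => ⟨a, hTH a ha⟩, fun L hL hLH => eq_bot_iff.2 fun s hs => ?_⟩
  obtain ⟨x, rfl⟩ := hL hs
  suffices hdisj : Disjoint (Submodule.span S {x} ⊔ K) H by
    exact (Submodule.mem_bot S).2 <|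
      hTK x (hK.2 hdisj le_sup_right (Submodule.mem_sup_left (Submodule.mem_span_singleton_self x)))
  refine Submodule.disjoint_def.2 fun a ha haH => ?_
  obtain ⟨_, hc, k, hk, rfl⟩ := Submodule.mem_sup.1 ha
  obtain ⟨r, rfl⟩ := Submodule.mem_span_singleton.1 hc
  have hTa : T (r • x + k) = r • T x := by rw [map_add, map_smul, hTK k hk, add_zero]
  have haL : r • x + k ∈ L := by rw [← hTH _ haH, hTa]; exact L.smul_mem r hs
  exact Submodule.disjoint_def.1 hLH _ haL haH

theorem Submodule.injective_of_maximal_isEssentialIn [Module.Injective S E]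
    {A H : Submodule S E} (hH : Maximal (IsEssentialIn A) H) : Module.Injective S H := by
  obtain ⟨K, hK⟩ := exists_maximal_disjoint H
  obtain ⟨T, hTH, hTK⟩ := Submodule.exists_endo_eq_self_and_eq_zero_of_disjoint hK.1
  have hHT : H ≤ LinearMap.range T := fun a ha => ⟨a, hTH a ha⟩
  have hrange : LinearMap.range T ≤ H :=
    hH.2 (hH.1.trans (isEssentialIn_range_of_maximal_disjoint hK hTH hTK)) hHT
  exact .of_leftInverse H.subtype (T.codRestrict H fun x => hrange ⟨x, rfl⟩)
    fun a => Subtype.ext (hTH a a.2)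

theorem IsEssentialIn.eq_bot_of_inf_comap_subtype_eq_bot {A H : Submodule S E}
    (h : IsEssentialIn A H) (K : Submodule S H) (hK : K ⊓ A.comap H.subtype = ⊥) : K = ⊥ := by
  have hmap : K.map H.subtype = ⊥ := by
    refine h.2 _ (Submodule.map_subtype_le H K) (Submodule.disjoint_def.2 ?_)
    rintro _ ⟨y, hy, rfl⟩ hyA
    have hy0 : y ∈ K ⊓ A.comap H.subtype := ⟨hy, hyA⟩
    rw [hK] at hy0
    simpa using hy0
  rwa [← Submodule.map_bot H.subtype,
    (Submodule.map_injective_of_injective H.injective_subtype).eq_iff] at hmap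

variable (S) in
theorem Module.exists_injective_extension (M : Type u) [AddCommGroup M] [Module S M] :
    ∃ (E : Type u) (_ : AddCommGroup E) (_ : Module S E) (f : M →ₗ[S] E),
      Module.Injective S E ∧ Function.Injective f := by
  let X := ModuleCat.of S M
  let E := CategoryTheory.Injective.under X
  have : CategoryTheory.Injective (ModuleCat.of S E) :=
    inferInstanceAs (CategoryTheory.Injective E)
  exact ⟨E, inferInstance, inferInstance, (CategoryTheory.Injective.ι X).hom,
    Module.injective_module_of_injective_object _ _,
    (ModuleCat.mono_iff_injective _).mp inferInstance⟩

variable (S) in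
theorem Module.exists_essential_injective_extension (M : Type u) [AddCommGroup M] [Module S M] :
    ∃ (E : Type u) (_ : AddCommGroup E) (_ : Module S E) (i : M →ₗ[S] E),
      Module.Injective S E ∧ Function.Injective i ∧
        ∀ K : Submodule S E, K ⊓ LinearMap.range i = ⊥ → K = ⊥ := by
  obtain ⟨E₀, _, _, f, hE₀, hf⟩ := Module.exists_injective_extension S M
  obtain ⟨H, hH⟩ := exists_maximal_isEssentialIn (LinearMap.range f)
  refine ⟨H, inferInstance, inferInstance, f.codRestrict H fun m => hH.1.1 ⟨m, rfl⟩,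
    Submodule.injective_of_maximal_isEssentialIn hH, fun a b hab => hf congr($hab.1), ?_⟩
  rw [LinearMap.range_codRestrict]
  exact hH.1.eq_bot_of_inf_comap_subtype_eq_bot

end InjectiveHull

section Purity

variable (R : Type) [Ring R]

theorem rTensorMap_mk {M M' L : Type} [AddCommGroup M] [Module Rᵐᵒᵖ M]
    [AddCommGroup M'] [Module Rᵐᵒᵖ M'] [AddCommGroup L] [Module R L]
    (f : M →ₗ[Rᵐᵒᵖ] M') (y : M ⊗[ℤ] L) :
    rTensorMap R (N := L) f (Submodule.Quotient.mk y) =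
      Submodule.Quotient.mk (LinearMap.rTensor L (f.restrictScalars ℤ) y) :=
  Submodule.mapQ_apply _ _ _ y

theorem rTensorMap_comp {M M' M'' L : Type} [AddCommGroup M] [Module Rᵐᵒᵖ M]
    [AddCommGroup M'] [Module Rᵐᵒᵖ M'] [AddCommGroup M''] [Module Rᵐᵒᵖ M'']
    [AddCommGroup L] [Module R L] (g : M' →ₗ[Rᵐᵒᵖ] M'') (f : M →ₗ[Rᵐᵒᵖ] M') :
    rTensorMap R (N := L) (g ∘ₗ f) =
      rTensorMap R (N := L) g ∘ₗ rTensorMap R (N := L) f := by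
  refine LinearMap.ext fun x => ?_
  rw [LinearMap.comp_apply]
  obtain ⟨y, rfl⟩ := Submodule.Quotient.mk_surjective _ x
  rw [rTensorMap_mk, rTensorMap_mk, rTensorMap_mk,
    LinearMap.restrictScalars_comp, LinearMap.rTensor_comp_apply]

theorem IsPure.of_comp {M M' M'' : Type} [AddCommGroup M] [Module Rᵐᵒᵖ M]
    [AddCommGroup M'] [Module Rᵐᵒᵖ M'] [AddCommGroup M''] [Module Rᵐᵒᵖ M'']
    {g : M' →ₗ[Rᵐᵒᵖ] M''} {f : M →ₗ[Rᵐᵒᵖ] M'} (h : IsPure R (g ∘ₗ f)) :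
    IsPure R f := by
  intro L _ _
  have hL := h L
  rw [rTensorMap_comp, LinearMap.coe_comp] at hL
  exact hL.of_comp

end Purity

/-- A right `R`-module `M` is absolutely pure iff `M` is a pure submodule of its
injective hull, i.e. iff for every injective module `E` and every essential
monomorphism `i : M → E`, the map `i` is pure. -/
theorem absolutelyPure_iff_pure_in_injective_hull (R : Type) [Ring R]
    (M : Type) [AddCommGroup M] [Module Rᵐᵒᵖ M] :
    AbsolutelyPure R M ↔
      ∀ (E : Type) [AddCommGroup E] [Module Rᵐᵒᵖ E] (i : M →ₗ[Rᵐᵒᵖ] E),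
        Module.Injective Rᵐᵒᵖ E → Function.Injective i →
          (∀ K : Submodule Rᵐᵒᵖ E, K ⊓ LinearMap.range i = ⊥ → K = ⊥) →
            IsPure R i := by
  refine ⟨fun h E _ _ i _ hi _ => h E i hi, fun h N _ _ j hj => ?_⟩
  obtain ⟨E, _, _, i, hE, hi, hess⟩ := Module.exists_essential_injective_extension Rᵐᵒᵖ M
  obtain ⟨φ, hφ⟩ := Module.Injective.extension_property Rᵐᵒᵖ E M N j hj i
  exact IsPure.of_comp R (g := φ) (hφ ▸ h E i hE hi hess)
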